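/- arXiv:2105.13019 — 2 statements merged into one kernel-verified Lean document; each statement's English description precedes it below -/
import Mathlib

section
/- Let $n \geq 1$ and $m \geq 0$ be integers, let $x \in \mathbb{R}$, and let $f : \mathbb{R} \to \mathbb{R}$ be $(n+2m+2)$-times continuously differentiable on a neighborhood of $x$. Then, as $h \to 0^+$, $$h^{-n}\sum_{j=0}^m\left(\int_{-1}^1 f(x+ht)\,P_{n+2j}(t)\,dt\right)\frac{P_{n+2j}^{(n)}(0)}{h_{n+2j}} = f^{(n)}(x) + (-1)^m\frac{\bigl|P_{n+2m+2}^{(n)}(0)\bigr|\,f^{(n+2m+2)}(x)}{\bigl|k_{n+2m+2}\bigr|\,(n+2m+2)!}\,h^{2m+2} + o(h^{2m+2}),$$ where $P_N^{(n)}$ denotes the $n$-th derivative of $P_N$, $h_N = \int_{-1}^1 P_N(t)^2\,dt = 2/(2N+1)$, and $k_N = 2^{-N}\binom{2N}{N}$ is the leading coefficient of $P_N$. -/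
open Real Filter Finset intervalIntegral Asymptotics

/-- Legendre polynomial of degree `n` (Rodrigues formula), the orthogonal polynomial
on `[-1,1]` with weight `1` normalized by `P n 1 = 1`. -/
noncomputable def legendreP (n : ℕ) : ℝ → ℝ :=
  fun x => (1 / ((2:ℝ) ^ n * (Nat.factorial n : ℝ))) *
    iteratedDeriv n (fun y : ℝ => (y ^ 2 - 1) ^ n) x

/-!
Expand `f (x + h t)` by Taylor's formula to order `K = n + 2m + 2` with Peano remainder. The weights
`P_N^{(n)}(0) / h_N` vanish for `N < n` and for odd `N - n`, so the sum may run over all `N < K`;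
against the moment `t ^ k` it then computes `p ↦ p^{(n)}(0)` of the orthogonal projection of `t ^ k`
onto the polynomials of degree `< K`. For `k < K` that projection is `t ^ k` itself, giving
`n! δ_{kn}`; for `k = K` it is `t ^ K - P_K / k_K`, giving `-P_K^{(n)}(0) / k_K`. The Peano
remainder contributes `o(h ^ K)` because the `P_N` are bounded on `[-1, 1]`.
-/

open Polynomial Metric Topology
open scoped Nat

noncomputable def legendrePoly (N : ℕ) : ℝ[X] :=
  C (1 / (2 ^ N * N ! : ℝ)) * derivative^[N] ((X ^ 2 - 1) ^ N)

theorem iteratedDeriv_eval_polynomial (p : ℝ[X]) (k : ℕ) :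
    iteratedDeriv k (fun x => p.eval x) = fun x => (derivative^[k] p).eval x := by
  induction k generalizing p with
  | zero => simp
  | succ k ih =>
    rw [iteratedDeriv_succ', Function.iterate_succ_apply, ← ih]
    congr 1
    funext x
    exact Polynomial.deriv p

theorem legendreP_eq_eval (N : ℕ) : legendreP N = fun t => (legendrePoly N).eval t := by
  have h : (fun y : ℝ => (y ^ 2 - 1) ^ N) = fun y => ((X ^ 2 - 1 : ℝ[X]) ^ N).eval y := by
    funext y; simp
  funext t
  simp [legendreP, legendrePoly, h, iteratedDeriv_eval_polynomial]

theorem eval_zero_iterate_derivative {R : Type*} [CommSemiring R] (p : R[X]) (n : ℕ) :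
    (derivative^[n] p).eval 0 = n ! * p.coeff n := by
  rw [← coeff_zero_eq_eval_zero, coeff_iterate_derivative, zero_add, Nat.descFactorial_self,
    nsmul_eq_mul]

theorem iteratedDeriv_legendreP_zero (n N : ℕ) :
    iteratedDeriv n (legendreP N) 0 = n ! * (legendrePoly N).coeff n := by
  rw [legendreP_eq_eval, iteratedDeriv_eval_polynomial]
  exact eval_zero_iterate_derivative _ n

theorem coeff_X_sq_sub_one_pow (N j : ℕ) :
    ((X ^ 2 - 1 : ℝ[X]) ^ N).coeff j =
      if 2 ∣ j then (-1 : ℝ) ^ (N - j / 2) * N.choose (j / 2) else 0 := by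
  have h : (X ^ 2 - 1 : ℝ[X]) ^ N = expand ℝ 2 ((X + C (-1)) ^ N) := by
    simp [sub_eq_add_neg]
  rw [h, coeff_expand two_pos, coeff_X_add_C_pow]

theorem coeff_legendrePoly (N j : ℕ) :
    (legendrePoly N).coeff j =
      (j + N).descFactorial N * ((X ^ 2 - 1 : ℝ[X]) ^ N).coeff (j + N) / (2 ^ N * N !) := by
  rw [legendrePoly, coeff_C_mul, coeff_iterate_derivative, nsmul_eq_mul]
  ring

theorem coeff_legendrePoly_of_lt {N j : ℕ} (h : N < j) : (legendrePoly N).coeff j = 0 := by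
  rw [coeff_legendrePoly, coeff_X_sq_sub_one_pow]
  split_ifs with h2
  · rw [Nat.choose_eq_zero_of_lt (by omega)]
    simp
  · simp

theorem coeff_legendrePoly_of_odd {N j : ℕ} (h : Odd (j + N)) :
    (legendrePoly N).coeff j = 0 := by
  rw [coeff_legendrePoly, coeff_X_sq_sub_one_pow, if_neg (by simpa [← even_iff_two_dvd] using h)]
  simp

theorem coeff_legendrePoly_self (N : ℕ) :
    (legendrePoly N).coeff N = (2 * N).choose N / 2 ^ N := by
  rw [coeff_legendrePoly, coeff_X_sq_sub_one_pow, ← two_mul, if_pos (dvd_mul_right 2 N),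
    Nat.mul_div_cancel_left N two_pos, Nat.sub_self, Nat.choose_self,
    Nat.descFactorial_eq_factorial_mul_choose]
  push_cast
  field_simp

theorem neg_one_pow_mul_coeff_legendrePoly_nonneg (n s : ℕ) :
    0 ≤ (-1) ^ s * (legendrePoly (n + 2 * s)).coeff n := by
  rw [coeff_legendrePoly, coeff_X_sq_sub_one_pow, if_pos ⟨n + s, by ring⟩,
    show (n + (n + 2 * s)) / 2 = n + s by omega, show n + 2 * s - (n + s) = s by omega]
  have hs : (-1 : ℝ) ^ s * (-1) ^ s = 1 := by rw [← pow_add, ← two_mul, pow_mul]; simp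
  calc (0 : ℝ) ≤ (n + (n + 2 * s)).descFactorial (n + 2 * s) * ((-1) ^ s * (-1) ^ s *
        (n + 2 * s).choose (n + s)) / (2 ^ (n + 2 * s) * (n + 2 * s)!) := by
        rw [hs]; positivity
    _ = _ := by ring

theorem coeff_legendrePoly_self_pos (N : ℕ) : 0 < (legendrePoly N).coeff N := by
  rw [coeff_legendrePoly_self]
  have : (0 : ℝ) < (2 * N).choose N := by exact_mod_cast Nat.choose_pos (by omega)
  positivity

theorem natDegree_legendrePoly (N : ℕ) : (legendrePoly N).natDegree = N :=
  natDegree_eq_of_le_of_coeff_ne_zero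
    (natDegree_le_iff_coeff_eq_zero.2 fun _ hj => coeff_legendrePoly_of_lt (by exact_mod_cast hj))
    (coeff_legendrePoly_self_pos N).ne'

theorem degree_legendrePoly (N : ℕ) : (legendrePoly N).degree = N :=
  degree_eq_of_le_of_coeff_ne_zero (degree_le_of_natDegree_le (natDegree_legendrePoly N).le)
    (coeff_legendrePoly_self_pos N).ne'

noncomputable def integralNegOneOne : ℝ[X] →ₗ[ℝ] ℝ where
  toFun p := ∫ t in (-1:ℝ)..1, p.eval t
  map_add' p q := by
    simp only [eval_add]
    exact integral_add (p.continuous.intervalIntegrable _ _) (q.continuous.intervalIntegrable _ _)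
  map_smul' c p := by simp

theorem integralNegOneOne_apply (p : ℝ[X]) :
    integralNegOneOne p = ∫ t in (-1:ℝ)..1, p.eval t := rfl

theorem integralNegOneOne_derivative (p : ℝ[X]) :
    integralNegOneOne (derivative p) = p.eval 1 - p.eval (-1) :=
  integral_eq_sub_of_hasDerivAt (fun t _ => p.hasDerivAt t)
    ((derivative p).continuous.intervalIntegrable _ _)

theorem integralNegOneOne_mul_derivative (p : ℝ[X]) {q : ℝ[X]} (hpos : q.eval 1 = 0)
    (hneg : q.eval (-1) = 0) :
    integralNegOneOne (p * derivative q) = -integralNegOneOne (derivative p * q) := by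
  have h := integralNegOneOne_derivative (p * q)
  rw [derivative_mul, map_add] at h
  simp only [eval_mul, hpos, hneg, mul_zero, sub_zero] at h
  linarith

theorem eval_iterate_derivative_eq_zero_of_pow_dvd {R : Type*} [CommRing R] {p : R[X]} {t : R}
    {N j : ℕ} (h : (X - C t) ^ N ∣ p) (hj : j < N) : (derivative^[j] p).eval t = 0 :=
  dvd_iff_isRoot.1 <| (dvd_pow_self _ (Nat.sub_ne_zero_of_lt hj)).trans
    (pow_sub_dvd_iterate_derivative_of_pow_dvd j h)

theorem integralNegOneOne_mul_iterate_derivative {q : ℝ[X]} {N : ℕ} (hpos : (X - C 1) ^ N ∣ q)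
    (hneg : (X - C (-1)) ^ N ∣ q) (a : ℝ[X]) {k : ℕ} (hk : k ≤ N) :
    integralNegOneOne (a * derivative^[k] q) =
      (-1) ^ k * integralNegOneOne (derivative^[k] a * q) := by
  induction k generalizing a with
  | zero => simp
  | succ k ih =>
    rw [Function.iterate_succ_apply', integralNegOneOne_mul_derivative a
      (eval_iterate_derivative_eq_zero_of_pow_dvd hpos hk)
      (eval_iterate_derivative_eq_zero_of_pow_dvd hneg hk), ih (derivative a) (by omega),
      ← Function.iterate_succ_apply, pow_succ]
    ring

theorem integral_one_sub_sq_pow (N : ℕ) :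
    ∫ x in (-1:ℝ)..1, (1 - x ^ 2) ^ N = 2 ^ (2 * N + 1) * (N ! : ℝ) ^ 2 / (2 * N + 1)! := by
  induction N with
  | zero => norm_num
  | succ N ih =>
    have hderiv : ∀ x : ℝ, HasDerivAt (fun x : ℝ => x * (1 - x ^ 2) ^ (N + 1))
        ((2 * N + 3) * (1 - x ^ 2) ^ (N + 1) - (2 * N + 2) * (1 - x ^ 2) ^ N) x := by
      intro x
      refine ((hasDerivAt_id' x).fun_mul
        (((hasDerivAt_pow 2 x).const_sub 1).fun_pow (N + 1))).congr_deriv ?_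
      simp only [Nat.add_sub_cancel]
      push_cast
      ring
    have hrec := integral_eq_sub_of_hasDerivAt (a := -1) (b := 1) (fun x _ => hderiv x)
      ((by fun_prop : Continuous fun x : ℝ =>
        (2 * N + 3) * (1 - x ^ 2) ^ (N + 1) - (2 * N + 2) * (1 - x ^ 2) ^ N).intervalIntegrable
          _ _)
    rw [integral_sub (Continuous.intervalIntegrable (by fun_prop) _ _)
      (Continuous.intervalIntegrable (by fun_prop) _ _), integral_const_mul, integral_const_mul,
      ih] at hrec
    norm_num at hrec
    have hN : (0 : ℝ) < 2 * N + 3 := by positivity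
    have hI : ∫ x in (-1:ℝ)..1, (1 - x ^ 2) ^ (N + 1) =
        (2 * N + 2) * (2 ^ (2 * N + 1) * (N ! : ℝ) ^ 2 / (2 * N + 1)!) / (2 * N + 3) := by
      rw [eq_div_iff hN.ne']
      linarith
    have hfac : ((2 * (N + 1) + 1)! : ℝ) = (2 * N + 3) * (2 * N + 2) * (2 * N + 1)! := by
      rw [show 2 * (N + 1) + 1 = 2 * N + 1 + 1 + 1 by ring, Nat.factorial_succ, Nat.factorial_succ]
      push_cast
      ring
    rw [hI, hfac, Nat.factorial_succ N]
    push_cast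
    field_simp
    ring

theorem iterate_derivative_of_natDegree_le {R : Type*} [Semiring R] {p : R[X]} {N : ℕ}
    (hp : p.natDegree ≤ N) : derivative^[N] p = C (N ! * p.coeff N) := by
  ext j
  rw [coeff_iterate_derivative, coeff_C, nsmul_eq_mul]
  rcases Nat.eq_zero_or_pos j with rfl | hj
  · simp [Nat.descFactorial_self]
  · rw [if_neg hj.ne', coeff_eq_zero_of_natDegree_lt (by omega), mul_zero]

theorem X_sq_sub_one_eq : (X ^ 2 - 1 : ℝ[X]) = (X - C 1) * (X - C (-1)) := by
  simp only [map_one, map_neg]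
  ring

theorem integralNegOneOne_mul_legendrePoly (a : ℝ[X]) (N : ℕ) :
    integralNegOneOne (a * legendrePoly N) =
      (-1) ^ N / (2 ^ N * N !) * integralNegOneOne (derivative^[N] a * (X ^ 2 - 1) ^ N) := by
  rw [legendrePoly, mul_left_comm, C_mul', map_smul, smul_eq_mul,
    integralNegOneOne_mul_iterate_derivative (q := (X ^ 2 - 1) ^ N)
      (pow_dvd_pow_of_dvd (X_sq_sub_one_eq ▸ dvd_mul_right _ _) N)
      (pow_dvd_pow_of_dvd (X_sq_sub_one_eq ▸ dvd_mul_left _ _) N) a le_rfl]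
  ring

theorem integralNegOneOne_mul_legendrePoly_eq_zero {a : ℝ[X]} {N : ℕ} (ha : a.natDegree < N) :
    integralNegOneOne (a * legendrePoly N) = 0 := by
  rw [integralNegOneOne_mul_legendrePoly, iterate_derivative_eq_zero ha, zero_mul, map_zero,
    mul_zero]

theorem integralNegOneOne_legendrePoly_mul_legendrePoly {M N : ℕ} (h : M ≠ N) :
    integralNegOneOne (legendrePoly M * legendrePoly N) = 0 := by
  rcases h.lt_or_gt with h | h
  · exact integralNegOneOne_mul_legendrePoly_eq_zero (by rwa [natDegree_legendrePoly])
  · rw [mul_comm]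
    exact integralNegOneOne_mul_legendrePoly_eq_zero (by rwa [natDegree_legendrePoly])

theorem integralNegOneOne_legendrePoly_mul_self (N : ℕ) :
    integralNegOneOne (legendrePoly N * legendrePoly N) = 2 / (2 * N + 1) := by
  have hW : integralNegOneOne ((X ^ 2 - 1) ^ N) =
      (-1) ^ N * ∫ x in (-1:ℝ)..1, (1 - x ^ 2) ^ N := by
    rw [integralNegOneOne_apply, ← integral_const_mul]
    refine integral_congr fun x _ => ?_
    simp only [eval_pow, eval_sub, eval_X, eval_one, ← mul_pow]
    ring
  rw [integralNegOneOne_mul_legendrePoly, iterate_derivative_of_natDegree_le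
    (natDegree_legendrePoly N).le, C_mul', map_smul, smul_eq_mul, hW, integral_one_sub_sq_pow,
    coeff_legendrePoly_self, Nat.cast_choose ℝ (by omega : N ≤ 2 * N),
    show 2 * N - N = N by omega, Nat.factorial_succ (2 * N)]
  push_cast
  field_simp
  rw [← pow_mul, mul_comm N 2, pow_mul, neg_one_sq, one_pow]
  ring

noncomputable def legendreSequence : Polynomial.Sequence ℝ := ⟨legendrePoly, degree_legendrePoly⟩

theorem exists_sum_smul_legendrePoly {p : ℝ[X]} {D : ℕ} (hp : p.degree < D) :
    ∃ c : ℕ → ℝ, ∑ i ∈ range D, c i • legendrePoly i = p := by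
  have hmem : p ∈ degreeLT ℝ D := mem_degreeLT.2 hp
  rwa [← legendreSequence.span_degreeLT fun i _ =>
      isUnit_iff_ne_zero.2 (leadingCoeff_ne_zero.2 (legendreSequence.ne_zero i)),
    show Set.Iio D = ↑(range D) by ext; simp,
    Submodule.mem_span_image_finset_iff_exists_fun'] at hmem

theorem integralNegOneOne_sum_smul_legendrePoly_mul (c : ℕ → ℝ) {D N : ℕ} (hN : N < D) :
    integralNegOneOne ((∑ i ∈ range D, c i • legendrePoly i) * legendrePoly N) =
      c N * (2 / (2 * N + 1)) := by
  simp only [sum_mul, map_sum, smul_mul_assoc, map_smul, smul_eq_mul]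
  rw [sum_eq_single_of_mem N (mem_range.2 hN) fun i _ hi => by
    rw [integralNegOneOne_legendrePoly_mul_legendrePoly hi, mul_zero],
    integralNegOneOne_legendrePoly_mul_self]

theorem sum_integralNegOneOne_mul_legendrePoly_smul {p : ℝ[X]} {D : ℕ} (hp : p.natDegree ≤ D) :
    ∑ N ∈ range D,
        (integralNegOneOne (p * legendrePoly N) / (2 / (2 * N + 1))) • legendrePoly N =
      p - (p.coeff D / (legendrePoly D).coeff D) • legendrePoly D := by
  set q := p - (p.coeff D / (legendrePoly D).coeff D) • legendrePoly D
  have hq : q.degree < D := by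
    refine (degree_lt_iff_coeff_zero q D).2 fun j hj => ?_
    rcases hj.eq_or_lt with rfl | hj
    · simp [q, (coeff_legendrePoly_self_pos D).ne']
    · simp [q, coeff_eq_zero_of_natDegree_lt (hp.trans_lt hj), coeff_legendrePoly_of_lt hj]
  obtain ⟨c, hc⟩ := exists_sum_smul_legendrePoly hq
  have hcoeff : ∀ N < D, integralNegOneOne (p * legendrePoly N) = c N * (2 / (2 * N + 1)) := by
    intro N hN
    rw [show p = q + (p.coeff D / (legendrePoly D).coeff D) • legendrePoly D by simp [q],
      add_mul, map_add, smul_mul_assoc, map_smul,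
      integralNegOneOne_legendrePoly_mul_legendrePoly hN.ne', smul_zero, add_zero, ← hc,
      integralNegOneOne_sum_smul_legendrePoly_mul c hN]
  rw [← hc]
  refine sum_congr rfl fun N hN => ?_
  rw [hcoeff N (mem_range.1 hN), mul_div_cancel_right₀ _ (by positivity)]

theorem sum_integralNegOneOne_mul_legendrePoly_mul_coeff {p : ℝ[X]} {D : ℕ}
    (hp : p.natDegree ≤ D) (n : ℕ) :
    ∑ N ∈ range D, integralNegOneOne (p * legendrePoly N) / (2 / (2 * N + 1)) *
        (legendrePoly N).coeff n =
      p.coeff n - p.coeff D / (legendrePoly D).coeff D * (legendrePoly D).coeff n := by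
  simpa [finsetSum_coeff] using
    congrArg (coeff · n) (sum_integralNegOneOne_mul_legendrePoly_smul hp)

theorem sum_range_add_two_mul {M : Type*} [AddCommMonoid M] {g : ℕ → M} {n : ℕ}
    (hlt : ∀ N < n, g N = 0) (hodd : ∀ i, g (n + (2 * i + 1)) = 0) (m : ℕ) :
    ∑ N ∈ range (n + 2 * m), g N = ∑ j ∈ range m, g (n + 2 * j) := by
  induction m with
  | zero => simpa using sum_eq_zero fun N hN => hlt N (mem_range.1 hN)
  | succ m ih =>
    rw [show n + 2 * (m + 1) = n + 2 * m + 1 + 1 by ring, sum_range_succ, sum_range_succ, ih,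
      sum_range_succ, show n + 2 * m + 1 = n + (2 * m + 1) by ring, hodd, add_zero]

theorem sum_integralNegOneOne_mul_legendrePoly_add_two_mul (n m : ℕ) {p : ℝ[X]}
    (hp : p.natDegree ≤ n + 2 * m) :
    ∑ j ∈ range m, integralNegOneOne (p * legendrePoly (n + 2 * j)) /
        (2 / (2 * ((n + 2 * j : ℕ) : ℝ) + 1)) * (legendrePoly (n + 2 * j)).coeff n =
      p.coeff n - p.coeff (n + 2 * m) / (legendrePoly (n + 2 * m)).coeff (n + 2 * m) *
        (legendrePoly (n + 2 * m)).coeff n := by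
  rw [← sum_integralNegOneOne_mul_legendrePoly_mul_coeff hp n]
  refine (sum_range_add_two_mul (g := fun N => integralNegOneOne (p * legendrePoly N) /
    (2 / (2 * (N : ℝ) + 1)) * (legendrePoly N).coeff n) (fun N hN => ?_) (fun i => ?_) m).symm
  · simp only [coeff_legendrePoly_of_lt hN, mul_zero]
  · simp only [coeff_legendrePoly_of_odd (N := n + (2 * i + 1)) (j := n) ⟨n + i, by ring⟩,
      mul_zero]

theorem legendreP_continuous (N : ℕ) : Continuous (legendreP N) := by
  rw [legendreP_eq_eval]
  exact (legendrePoly N).continuous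

theorem sum_integral_pow_mul_legendreP (n m : ℕ) {k : ℕ} (hk : k ≤ n + 2 * m) :
    ∑ j ∈ range m, (∫ t in (-1:ℝ)..1, t ^ k * legendreP (n + 2 * j) t) *
        (iteratedDeriv n (legendreP (n + 2 * j)) 0 / (2 / (2 * ((n : ℝ) + 2 * j) + 1))) =
      n ! * ((X ^ k : ℝ[X]).coeff n - (X ^ k : ℝ[X]).coeff (n + 2 * m) /
        (legendrePoly (n + 2 * m)).coeff (n + 2 * m) * (legendrePoly (n + 2 * m)).coeff n) := by
  rw [← sum_integralNegOneOne_mul_legendrePoly_add_two_mul n m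
    ((natDegree_X_pow_le k).trans hk), mul_sum]
  refine sum_congr rfl fun j _ => ?_
  rw [iteratedDeriv_legendreP_zero]
  simp only [integralNegOneOne_apply, legendreP_eq_eval, eval_mul, eval_pow, eval_X]
  push_cast
  ring

theorem taylor_isLittleO_of_contDiffOn_ball {f : ℝ → ℝ} {x ε : ℝ} {K : ℕ} (hε : 0 < ε)
    (hf : ContDiffOn ℝ K f (ball x ε)) :
    (fun u => f (x + u) - ∑ k ∈ range (K + 1), iteratedDeriv k f x / k ! * u ^ k)
      =o[𝓝 0] (fun u => u ^ K) := by
  have hx : x ∈ ball x ε := mem_ball_self hε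
  have h := taylor_isLittleO (convex_ball x ε) hx hf
  rw [isOpen_ball.nhdsWithin_eq hx] at h
  have hshift : Tendsto (fun u : ℝ => x + u) (𝓝 0) (𝓝 x) :=
    (continuous_const_add x).tendsto' 0 x (add_zero x)
  refine (h.comp_tendsto hshift).congr (fun u => ?_) (fun u => by simp)
  simp only [Function.comp_apply, taylor_within_apply, add_sub_cancel_left, smul_eq_mul]
  congr 1
  refine sum_congr rfl fun k _ => ?_
  rw [iteratedDerivWithin_of_isOpen isOpen_ball hx]
  ring

theorem isLittleO_integral_comp_mul {R w : ℝ → ℝ} {K : ℕ} (hR : R =o[𝓝 0] (fun u => u ^ K))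
    (hw : ContinuousOn w (Set.Icc (-1) 1)) :
    (fun h => ∫ t in (-1:ℝ)..1, R (h * t) * w t) =o[𝓝 0] (fun h => h ^ K) := by
  obtain ⟨B, hB⟩ := isCompact_Icc.exists_bound_of_continuousOn hw
  have hB0 : 0 ≤ B := (norm_nonneg _).trans (hB 0 (by norm_num))
  refine isLittleO_iff.2 fun c hc => ?_
  obtain ⟨δ, hδ, hRδ⟩ := Metric.eventually_nhds_iff.1
    (isLittleO_iff.1 hR (c := c / (2 * B + 1)) (by positivity))
  filter_upwards [ball_mem_nhds (0 : ℝ) hδ] with h hh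
  have hbound : ∀ t ∈ Set.uIoc (-1 : ℝ) 1,
      ‖R (h * t) * w t‖ ≤ c / (2 * B + 1) * ‖h ^ K‖ * B := by
    intro t ht
    rw [Set.uIoc_of_le (by norm_num)] at ht
    have ht1 : ‖t‖ ≤ 1 := abs_le.2 ⟨ht.1.le, ht.2⟩
    have hht : ‖h * t‖ ≤ ‖h‖ := by
      rw [norm_mul]; exact mul_le_of_le_one_right (norm_nonneg _) ht1
    have hRt : ‖R (h * t)‖ ≤ c / (2 * B + 1) * ‖h ^ K‖ := by
      refine (hRδ (lt_of_le_of_lt (by simpa using hht) hh)).trans ?_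
      gcongr
      simp only [norm_pow]
      gcongr
    rw [norm_mul]
    exact mul_le_mul hRt (hB t ⟨ht.1.le, ht.2⟩) (norm_nonneg _) (by positivity)
  calc ‖∫ t in (-1:ℝ)..1, R (h * t) * w t‖
      ≤ c / (2 * B + 1) * ‖h ^ K‖ * B * |1 - (-1)| :=
        intervalIntegral.norm_integral_le_of_norm_le_const hbound
    _ = c * ‖h ^ K‖ * (2 * B / (2 * B + 1)) := by ring_nf
    _ ≤ c * ‖h ^ K‖ := by
        refine mul_le_of_le_one_right (by positivity) ?_
        rw [div_le_one (by positivity)]; linarith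

theorem isLittleO_integral_comp_sub_taylor {f w : ℝ → ℝ} {x ε : ℝ} {K : ℕ} (hε : 0 < ε)
    (hf : ContDiffOn ℝ K f (ball x ε)) (hw : Continuous w) :
    (fun h => (∫ t in (-1:ℝ)..1, f (x + h * t) * w t) - ∑ k ∈ range (K + 1),
        iteratedDeriv k f x / k ! * h ^ k * ∫ t in (-1:ℝ)..1, t ^ k * w t)
      =o[𝓝 0] (fun h => h ^ K) := by
  refine (isLittleO_integral_comp_mul (taylor_isLittleO_of_contDiffOn_ball hε hf)
    hw.continuousOn).congr' ?_ EventuallyEq.rfl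
  filter_upwards [ball_mem_nhds (0 : ℝ) hε] with h hh
  have hmaps : Set.MapsTo (fun t => x + h * t) (Set.uIcc (-1) 1) (ball x ε) := by
    intro t ht
    rw [Set.uIcc_of_le (by norm_num)] at ht
    rw [mem_ball, dist_self_add_left, norm_mul]
    refine lt_of_le_of_lt (mul_le_of_le_one_right (norm_nonneg _) (abs_le.2 ht)) ?_
    simpa using hh
  have hf_int : IntervalIntegrable (fun t => f (x + h * t) * w t) MeasureTheory.volume (-1) 1 :=
    ((hf.continuousOn.comp (by fun_prop) hmaps).mul hw.continuousOn).intervalIntegrable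
  have hmoment_int :
      ∀ k : ℕ, IntervalIntegrable (fun t => t ^ k * w t) MeasureTheory.volume (-1) 1 :=
    fun k => ((continuous_pow k).mul hw).intervalIntegrable _ _
  calc ∫ t in (-1:ℝ)..1, (f (x + h * t) -
        ∑ k ∈ range (K + 1), iteratedDeriv k f x / k ! * (h * t) ^ k) * w t
      = ∫ t in (-1:ℝ)..1, (f (x + h * t) * w t -
          ∑ k ∈ range (K + 1), iteratedDeriv k f x / k ! * h ^ k * (t ^ k * w t)) := by
        refine integral_congr fun t _ => ?_
        simp only [sub_mul, sum_mul, mul_pow]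
        congr 1
        exact sum_congr rfl fun k _ => by ring
    _ = _ := by
        rw [integral_sub hf_int, integral_finsetSum]
        · simp only [integral_const_mul]
        · exact fun k _ => (hmoment_int k).const_mul _
        · exact (continuous_finsetSum _ fun k _ =>
            continuous_const.mul ((continuous_pow k).mul hw)).intervalIntegrable _ _

theorem isLittleO_sum_integral_legendreP {f : ℝ → ℝ} {x ε : ℝ} (hε : 0 < ε) (n m : ℕ)
    (hf : ContDiffOn ℝ (n + 2 * m : ℕ) f (ball x ε)) :
    (fun h => ∑ j ∈ range m, (∫ t in (-1:ℝ)..1, f (x + h * t) * legendreP (n + 2 * j) t) *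
          (iteratedDeriv n (legendreP (n + 2 * j)) 0 / (2 / (2 * ((n : ℝ) + 2 * j) + 1))) -
        (iteratedDeriv n f x * h ^ n - iteratedDeriv (n + 2 * m) f x / (n + 2 * m)! * n ! *
          ((legendrePoly (n + 2 * m)).coeff n / (legendrePoly (n + 2 * m)).coeff (n + 2 * m)) *
          h ^ (n + 2 * m)))
      =o[𝓝 0] (fun h => h ^ (n + 2 * m)) := by
  set K := n + 2 * m
  refine (IsLittleO.sum fun j (_ : j ∈ range m) =>
    (isLittleO_integral_comp_sub_taylor hε hf (legendreP_continuous (n + 2 * j))).const_mul_left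
      (iteratedDeriv n (legendreP (n + 2 * j)) 0 / (2 / (2 * ((n : ℝ) + 2 * j) + 1)))).congr_left
    fun h => ?_
  have hmoments : ∀ k ∈ range (K + 1), ∑ j ∈ range m,
      iteratedDeriv n (legendreP (n + 2 * j)) 0 / (2 / (2 * ((n : ℝ) + 2 * j) + 1)) *
        (iteratedDeriv k f x / k ! * h ^ k * ∫ t in (-1:ℝ)..1, t ^ k * legendreP (n + 2 * j) t) =
      iteratedDeriv k f x / k ! * h ^ k * (n ! * ((X ^ k : ℝ[X]).coeff n -
        (X ^ k : ℝ[X]).coeff K / (legendrePoly K).coeff K * (legendrePoly K).coeff n)) := by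
    intro k hk
    rw [← sum_integral_pow_mul_legendreP n m (Nat.lt_succ_iff.1 (mem_range.1 hk)), mul_sum]
    exact sum_congr rfl fun j _ => by ring
  simp only [Finset.sum_apply, mul_sub, sum_sub_distrib, mul_sum]
  congr 1
  · exact sum_congr rfl fun j _ => mul_comm _ _
  rw [sum_comm, sum_congr rfl hmoments]
  simp only [coeff_X_pow, ite_div, ite_mul, mul_ite, zero_div, zero_mul, mul_zero, mul_sub,
    sum_sub_distrib, sum_ite_eq, mem_range, Nat.lt_succ_iff, le_refl, if_true]
  rw [if_pos (Nat.le_add_right n _)]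
  field_simp

theorem isLittleO_zpow_neg_mul {E : ℝ → ℝ} {n q : ℕ} (hE : E =o[𝓝 0] (fun h => h ^ (n + q))) :
    (fun h => h ^ (-(n : ℤ)) * E h) =o[𝓝[≠] 0] (fun h => h ^ q) := by
  refine ((isBigO_refl (fun h : ℝ => h ^ (-(n : ℤ))) _).mul_isLittleO
    (hE.mono nhdsWithin_le_nhds)).congr' EventuallyEq.rfl ?_
  filter_upwards [self_mem_nhdsWithin] with h hh
  rw [zpow_neg, zpow_natCast, pow_add, inv_mul_cancel_left₀ (pow_ne_zero n hh)]

theorem abs_iteratedDeriv_legendreP_zero (n s : ℕ) :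
    |iteratedDeriv n (legendreP (n + 2 * s)) 0| =
      (-1) ^ s * iteratedDeriv n (legendreP (n + 2 * s)) 0 := by
  have h := abs_of_nonneg (neg_one_pow_mul_coeff_legendrePoly_nonneg n s)
  rw [abs_mul, abs_neg_one_pow, one_mul] at h
  rw [iteratedDeriv_legendreP_zero, abs_mul, Nat.abs_cast, h]
  ring

theorem stmt0_general (n m : ℕ) (x : ℝ) (f : ℝ → ℝ)
    (hf : ∃ ε > (0:ℝ), ContDiffOn ℝ ((n + 2*m + 2 : ℕ) : ℕ∞) f (Metric.ball x ε)) :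
    (fun h : ℝ =>
        h ^ (-(n:ℤ)) * ∑ j ∈ Finset.range (m+1),
          (∫ t in (-1:ℝ)..1, f (x + h*t) * legendreP (n + 2*j) t) *
            (iteratedDeriv n (legendreP (n + 2*j)) 0 / (2 / (2*((n:ℝ) + 2*j) + 1)))
        - iteratedDeriv n f x
        - (-1:ℝ)^m *
            (|iteratedDeriv n (legendreP (n + 2*m + 2)) 0| *
              iteratedDeriv (n + 2*m + 2) f x /
              (|(Nat.choose (2*(n + 2*m + 2)) (n + 2*m + 2) : ℝ) / 2 ^ (n + 2*m + 2)| *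
                (Nat.factorial (n + 2*m + 2) : ℝ))) * h ^ (2*m + 2))
      =o[nhdsWithin (0:ℝ) (Set.Ioi 0)] (fun h : ℝ => h ^ (2*m + 2)) := by
  obtain ⟨ε, hε, hf⟩ := hf
  have hexp := isLittleO_sum_integral_legendreP hε n (m + 1) hf
  have habs := abs_iteratedDeriv_legendreP_zero n (m + 1)
  rw [show n + 2 * (m + 1) = n + 2 * m + 2 by ring] at hexp habs
  have hsign : (-1:ℝ) ^ m * |iteratedDeriv n (legendreP (n + 2 * m + 2)) 0| =
      -iteratedDeriv n (legendreP (n + 2 * m + 2)) 0 := by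
    rw [habs, ← mul_assoc, ← pow_add, show m + (m + 1) = 2 * m + 1 by ring, pow_succ, pow_mul]
    norm_num
  have hconst : (-1:ℝ) ^ m * (|iteratedDeriv n (legendreP (n + 2 * m + 2)) 0| *
      iteratedDeriv (n + 2 * m + 2) f x / (|((2 * (n + 2 * m + 2)).choose (n + 2 * m + 2) : ℝ) /
        2 ^ (n + 2 * m + 2)| * (n + 2 * m + 2)!)) =
      -(iteratedDeriv (n + 2 * m + 2) f x / (n + 2 * m + 2)! * n ! *
        ((legendrePoly (n + 2 * m + 2)).coeff n /
          (legendrePoly (n + 2 * m + 2)).coeff (n + 2 * m + 2))) := by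
    rw [← coeff_legendrePoly_self, abs_of_pos (coeff_legendrePoly_self_pos _), ← mul_div_assoc,
      ← mul_assoc, hsign, iteratedDeriv_legendreP_zero]
    ring
  refine ((isLittleO_zpow_neg_mul (q := 2 * m + 2) hexp).mono
    (nhdsWithin_mono _ fun h hh => ne_of_gt hh)).congr' ?_ EventuallyEq.rfl
  filter_upwards [self_mem_nhdsWithin] with h (hh : 0 < h)
  rw [hconst, zpow_neg, zpow_natCast, show n + 2 * m + 2 = n + (2 * m + 2) by ring, pow_add]
  field_simp
  ring

theorem stmt0 (n m : ℕ) (hn : 1 ≤ n) (x : ℝ) (f : ℝ → ℝ)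
    (hf : ∃ ε > (0:ℝ), ContDiffOn ℝ ((n + 2*m + 2 : ℕ) : ℕ∞) f (Metric.ball x ε)) :
    (fun h : ℝ =>
        h ^ (-(n:ℤ)) * ∑ j ∈ Finset.range (m+1),
          (∫ t in (-1:ℝ)..1, f (x + h*t) * legendreP (n + 2*j) t) *
            (iteratedDeriv n (legendreP (n + 2*j)) 0 / (2 / (2*((n:ℝ) + 2*j) + 1)))
        - iteratedDeriv n f x
        - (-1:ℝ)^m *
            (|iteratedDeriv n (legendreP (n + 2*m + 2)) 0| *
              iteratedDeriv (n + 2*m + 2) f x /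
              (|(Nat.choose (2*(n + 2*m + 2)) (n + 2*m + 2) : ℝ) / 2 ^ (n + 2*m + 2)| *
                (Nat.factorial (n + 2*m + 2) : ℝ))) * h ^ (2*m + 2))
      =o[nhdsWithin (0:ℝ) (Set.Ioi 0)] (fun h : ℝ => h ^ (2*m + 2)) :=
  stmt0_general n m x f hf
end

section
/- Let $x \in \mathbb{R}$, $h > 0$, and let $f : \mathbb{R} \to \mathbb{R}$ be continuous on $[x, x+h]$. Then the function $(a,b) \mapsto \int_0^1 \bigl[f(x+uh) - a - b\,(x+uh)\bigr]^2\,du$ attains a minimum over $(a,b) \in \mathbb{R}^2$, and at any minimizer the slope is $$b = \frac{6}{h}\int_0^1 f(x+hu)\,(2u-1)\,du.$$ -/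
open Real Filter intervalIntegral

/-!
Put `g u = f (x + u h)`. The substitution `(c, d) = (a + b x, b h)` is a bijection of `ℝ²`
(as `h ≠ 0`) turning the objective into `∫₀¹ (g u - c - d u)²`, a quadratic polynomial in `(c, d)`
with positive definite leading part `c² + c d + d² / 3 = (c + d / 2)² + d² / 12`. Completing the
square shows that it has a unique minimiser, whose slope is `d = 6 ∫₀¹ g u (2 u - 1) du = b h`.
-/

open MeasureTheory (volume)

lemma integral_sq_affine_unitInterval (c d : ℝ) :
    ∫ u in (0:ℝ)..1, (c + d * u) ^ 2 = c ^ 2 + c * d + d ^ 2 / 3 := by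
  have hexpand : (fun u : ℝ => (c + d * u) ^ 2) =
      fun u => (c ^ 2 + 2 * c * d * u) + d ^ 2 * u ^ 2 := by
    funext u; ring
  rw [hexpand, integral_add (Continuous.intervalIntegrable (by fun_prop) _ _)
    (Continuous.intervalIntegrable (by fun_prop) _ _),
    integral_add intervalIntegrable_const (Continuous.intervalIntegrable (by fun_prop) _ _),
    integral_const_mul, integral_const_mul]
  norm_num
  ring

/-- The least-squares line `u ↦ c + d * u` for `g` on `[0, 1]`: the coefficients solve the normal
equations, whose Gram matrix `!![1, 1/2; 1/2, 1/3]` has inverse `!![4, -6; -6, 12]`. -/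
noncomputable def affineFitIntercept (g : ℝ → ℝ) : ℝ :=
  4 * (∫ u in (0:ℝ)..1, g u) - 6 * ∫ u in (0:ℝ)..1, g u * u

noncomputable def affineFitSlope (g : ℝ → ℝ) : ℝ :=
  12 * (∫ u in (0:ℝ)..1, g u * u) - 6 * ∫ u in (0:ℝ)..1, g u

section AffineFit

variable {g : ℝ → ℝ}

theorem affineFitSlope_eq (hg : IntervalIntegrable g volume 0 1) :
    affineFitSlope g = 6 * ∫ u in (0:ℝ)..1, g u * (2 * u - 1) := by
  have hexpand : (fun u => g u * (2 * u - 1)) = fun u => 2 * (g u * u) - g u := by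
    funext u; ring
  have hgu : IntervalIntegrable (fun u => g u * u) volume 0 1 :=
    hg.mul_continuousOn continuousOn_id
  rw [affineFitSlope, hexpand, integral_sub (hgu.const_mul 2) hg, integral_const_mul]
  ring

variable (hg : IntervalIntegrable g volume 0 1)
  (hg2 : IntervalIntegrable (fun u => g u ^ 2) volume 0 1)
include hg hg2

theorem integral_sq_sub_affine_unitInterval (c d : ℝ) :
    ∫ u in (0:ℝ)..1, (g u - c - d * u) ^ 2 =
      (∫ u in (0:ℝ)..1, g u ^ 2) - 2 * c * (∫ u in (0:ℝ)..1, g u)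
        - 2 * d * (∫ u in (0:ℝ)..1, g u * u) + (c ^ 2 + c * d + d ^ 2 / 3) := by
  have hgu : IntervalIntegrable (fun u => g u * u) volume 0 1 :=
    hg.mul_continuousOn continuousOn_id
  have hexpand : (fun u => (g u - c - d * u) ^ 2) =
      fun u => (g u ^ 2 - 2 * c * g u - 2 * d * (g u * u)) + (c + d * u) ^ 2 := by
    funext u; ring
  rw [hexpand, integral_add ((hg2.sub (hg.const_mul _)).sub (hgu.const_mul _))
      (Continuous.intervalIntegrable (by fun_prop) _ _),
    integral_sub (hg2.sub (hg.const_mul _)) (hgu.const_mul _),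
    integral_sub hg2 (hg.const_mul _), integral_const_mul, integral_const_mul,
    integral_sq_affine_unitInterval]

theorem integral_sq_sub_affine_eq_affineFit_add (c d : ℝ) :
    ∫ u in (0:ℝ)..1, (g u - c - d * u) ^ 2 =
      (∫ u in (0:ℝ)..1, (g u - affineFitIntercept g - affineFitSlope g * u) ^ 2)
        + (c - affineFitIntercept g + (d - affineFitSlope g) / 2) ^ 2
        + (d - affineFitSlope g) ^ 2 / 12 := by
  rw [integral_sq_sub_affine_unitInterval hg hg2, integral_sq_sub_affine_unitInterval hg hg2,
    affineFitIntercept, affineFitSlope]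
  ring

theorem integral_sq_sub_affineFit_le (c d : ℝ) :
    ∫ u in (0:ℝ)..1, (g u - affineFitIntercept g - affineFitSlope g * u) ^ 2 ≤
      ∫ u in (0:ℝ)..1, (g u - c - d * u) ^ 2 := by
  rw [integral_sq_sub_affine_eq_affineFit_add hg hg2 c d]
  nlinarith [sq_nonneg (c - affineFitIntercept g + (d - affineFitSlope g) / 2),
    sq_nonneg (d - affineFitSlope g)]

theorem eq_affineFitSlope_of_integral_sq_sub_le {c d : ℝ}
    (hmin : ∫ u in (0:ℝ)..1, (g u - c - d * u) ^ 2 ≤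
      ∫ u in (0:ℝ)..1, (g u - affineFitIntercept g - affineFitSlope g * u) ^ 2) :
    d = affineFitSlope g := by
  rw [integral_sq_sub_affine_eq_affineFit_add hg hg2 c d] at hmin
  nlinarith [sq_nonneg (c - affineFitIntercept g + (d - affineFitSlope g) / 2),
    sq_nonneg (d - affineFitSlope g)]

end AffineFit

theorem stmt19 (x h : ℝ) (hh : 0 < h) (f : ℝ → ℝ)
    (hf : ContinuousOn f (Set.Icc x (x + h))) :
    let F : ℝ × ℝ → ℝ := fun p =>
      ∫ u in (0:ℝ)..1, (f (x + u*h) - p.1 - p.2 * (x + u*h))^2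
    (∃ p : ℝ × ℝ, ∀ q : ℝ × ℝ, F p ≤ F q) ∧
      ∀ a b : ℝ, (∀ q : ℝ × ℝ, F (a, b) ≤ F q) →
        b = (6 / h) * ∫ u in (0:ℝ)..1, f (x + h*u) * (2*u - 1) := by
  intro F
  set g : ℝ → ℝ := fun u => f (x + u * h)
  have hg : ContinuousOn g (Set.uIcc 0 1) := by
    refine hf.comp (by fun_prop) fun u hu => ?_
    rw [Set.uIcc_of_le zero_le_one] at hu
    constructor <;> nlinarith [hu.1, hu.2]
  have hg1 := hg.intervalIntegrable (μ := volume)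
  have hg2 := (hg.pow 2).intervalIntegrable (μ := volume)
  -- the substitution `(c, d) = (a + b x, b h)` turns `F` into the fitting error of `g`
  have hF (p : ℝ × ℝ) : F p = ∫ u in (0:ℝ)..1, (g u - (p.1 + p.2 * x) - p.2 * h * u) ^ 2 :=
    integral_congr fun u _ => by ring
  set p₀ : ℝ × ℝ := (affineFitIntercept g - affineFitSlope g / h * x, affineFitSlope g / h)
  have hFp₀ : F p₀ = ∫ u in (0:ℝ)..1,
      (g u - affineFitIntercept g - affineFitSlope g * u) ^ 2 := by
    rw [hF]
    refine integral_congr fun u _ => ?_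
    simp only [p₀]
    field_simp
    ring
  refine ⟨⟨p₀, fun q => ?_⟩, fun a b hmin => ?_⟩
  · rw [hFp₀, hF]
    exact integral_sq_sub_affineFit_le hg1 hg2 _ _
  · have hslope : b * h = affineFitSlope g :=
      eq_affineFitSlope_of_integral_sq_sub_le hg1 hg2 (c := a + b * x)
        (by rw [← hF (a, b), ← hFp₀]; exact hmin p₀)
    rw [affineFitSlope_eq hg1] at hslope
    simp only [g, mul_comm _ h] at hslope
    rw [div_mul_eq_mul_div, eq_div_iff hh.ne']
    linarith
end
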